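/- arXiv:1808.02393 — 6 statements merged into one kernel-verified Lean document; each statement's English description precedes it below -/
import Mathlib

section
/- Let h : ℝ → ℝ be differentiable with h(0) < 0, and suppose there exist γ > 0 and ρ ∈ [0,1) such that for all t ≥ 0, h'(t) ≥ -γ · sign(h(t)) · |h(t)|^ρ. Then there exists a time T with 0 < T ≤ |h(0)|^(1-ρ)/(γ(1-ρ)) such that h(T) ≥ 0. -/
theorem stmt_0 (h : ℝ → ℝ) (hdiff : Differentiable ℝ h) (h0 : h 0 < 0)
    (γ ρ : ℝ) (hγ : 0 < γ) (hρ0 : 0 ≤ ρ) (hρ1 : ρ < 1)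
    (hineq : ∀ t : ℝ, 0 ≤ t → deriv h t ≥ -γ * Real.sign (h t) * |h t| ^ ρ) :
    ∃ T : ℝ, 0 < T ∧ T ≤ |h 0| ^ (1 - ρ) / (γ * (1 - ρ)) ∧ h T ≥ 0 := by
  set T : ℝ := |h 0| ^ (1 - ρ) / (γ * (1 - ρ)) with hTdef
  have hρ' : (0:ℝ) < 1 - ρ := by linarith
  have h0' : 0 < -h 0 := by linarith
  have habs : |h 0| = -h 0 := abs_of_neg h0
  have hTpos : 0 < T := by
    apply div_pos (Real.rpow_pos_of_pos (by rw [habs]; exact h0') _)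
    positivity
  by_contra hc
  push_neg at hc
  have hneg : ∀ t ∈ Set.Icc (0:ℝ) T, h t < 0 := by
    intro t ht
    rcases eq_or_lt_of_le ht.1 with h' | h'
    · rwa [← h']
    · exact hc t h' ht.2
  set φ : ℝ → ℝ := fun t => (-h t) ^ (1 - ρ) + γ * (1 - ρ) * t with hφ
  set φ' : ℝ → ℝ := fun t => (-deriv h t) * (1 - ρ) * (-h t) ^ (1 - ρ - 1) + γ * (1 - ρ)
    with hφ'
  have hanti : AntitoneOn φ (Set.Icc 0 T) := by
    apply antitoneOn_of_hasDerivWithinAt_nonpos (convex_Icc 0 T) (f' := φ')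
    · apply ContinuousOn.add
      · exact (hdiff.continuous.neg.continuousOn).rpow_const
          (fun x _ => Or.inr (le_of_lt hρ'))
      · exact (continuous_const.mul continuous_id).continuousOn
    · intro t ht
      rw [interior_Icc] at ht
      have hht : -h t ≠ 0 := by
        have := hneg t ⟨le_of_lt ht.1, le_of_lt ht.2⟩; linarith
      have h1 : HasDerivAt (fun t => -h t) (-deriv h t) t := (hdiff t).hasDerivAt.neg
      have ha := h1.rpow_const (p := 1 - ρ) (Or.inl hht)
      have hb : HasDerivAt (fun x : ℝ => γ * (1 - ρ) * x) (γ * (1 - ρ)) t := by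
        simpa using (hasDerivAt_id t).const_mul (γ * (1 - ρ))
      exact (ha.add hb).hasDerivWithinAt
    · intro t ht
      rw [interior_Icc] at ht
      have hht : h t < 0 := hneg t ⟨le_of_lt ht.1, le_of_lt ht.2⟩
      have hA : 0 < -h t := by linarith
      have hs : Real.sign (h t) = -1 := Real.sign_of_neg hht
      have hd : deriv h t ≥ γ * (-h t) ^ ρ := by
        have := hineq t (le_of_lt ht.1)
        rw [hs, abs_of_neg hht] at this
        ring_nf at this ⊢
        linarith
      have hpow : 0 < (-h t) ^ (1 - ρ - 1) := Real.rpow_pos_of_pos hA _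
      have hle : -deriv h t ≤ -(γ * (-h t) ^ ρ) := by linarith
      have hmul : (-h t) ^ ρ * (-h t) ^ (1 - ρ - 1) = 1 := by
        rw [← Real.rpow_add hA]; norm_num
      have key := mul_le_mul_of_nonneg_right hle
        (show (0:ℝ) ≤ (1 - ρ) * (-h t) ^ (1 - ρ - 1) by positivity)
      have heq : -(γ * (-h t) ^ ρ) * ((1 - ρ) * (-h t) ^ (1 - ρ - 1))
          = -(γ * (1 - ρ)) := by
        linear_combination (-(γ * (1 - ρ))) * hmul
      show φ' t ≤ 0
      simp only [hφ']
      nlinarith [key, heq]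
  have hle := hanti (Set.left_mem_Icc.2 (le_of_lt hTpos))
    (Set.right_mem_Icc.2 (le_of_lt hTpos)) (le_of_lt hTpos)
  have hTeq : γ * (1 - ρ) * T = (-h 0) ^ (1 - ρ) := by
    rw [hTdef, habs]; field_simp
  have hhT : h T < 0 := hc T hTpos le_rfl
  have hposT : 0 < (-h T) ^ (1 - ρ) := Real.rpow_pos_of_pos (by linarith) _
  simp only [hφ] at hle
  rw [mul_zero, add_zero] at hle
  linarith
end

section
/- Let h : ℝ → ℝ be differentiable, γ > 0, ρ ∈ [0,1), and suppose for all t ≥ 0, h'(t) ≥ -γ · sign(h(t)) · |h(t)|^ρ. If h(t₀) ≥ 0 for some t₀ ≥ 0, then h(t) ≥ 0 for all t ≥ t₀. -/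
theorem stmt_1 (h : ℝ → ℝ) (hdiff : Differentiable ℝ h)
    (γ ρ : ℝ) (hγ : 0 < γ) (hρ0 : 0 ≤ ρ) (hρ1 : ρ < 1)
    (hineq : ∀ t : ℝ, 0 ≤ t → deriv h t ≥ -γ * Real.sign (h t) * |h t| ^ ρ)
    (t₀ : ℝ) (ht₀ : 0 ≤ t₀) (h0 : h t₀ ≥ 0) :
    ∀ t : ℝ, t₀ ≤ t → h t ≥ 0 := by
  intro t₁ ht₁
  by_contra hneg
  push_neg at hneg
  -- Let S be the set of points in [t₀, t₁] where h is nonnegative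
  set S : Set ℝ := Set.Icc t₀ t₁ ∩ h ⁻¹' Set.Ici 0 with hS
  have hSne : S.Nonempty := ⟨t₀, ⟨le_refl _, ht₁⟩, h0⟩
  have hSbdd : BddAbove S := ⟨t₁, fun x hx => hx.1.2⟩
  have hSclosed : IsClosed S :=
    (isClosed_Icc).inter (isClosed_Ici.preimage hdiff.continuous)
  set s := sSup S with hs
  have hsS : s ∈ S := hSclosed.csSup_mem hSne hSbdd
  have hst₁ : s ≤ t₁ := hsS.1.2
  have hhs : 0 ≤ h s := hsS.2
  have hst₀ : t₀ ≤ s := hsS.1.1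
  -- every point strictly between s and t₁ has h < 0
  have hbetween : ∀ u, u ∈ Set.Ioo s t₁ → h u < 0 := by
    intro u hu
    by_contra hcon
    push_neg at hcon
    have : u ∈ S := ⟨⟨le_trans hst₀ hu.1.le, hu.2.le⟩, hcon⟩
    exact absurd (le_csSup hSbdd this) (not_le.mpr hu.1)
  -- deriv h is nonnegative on (s, t₁)
  have hderiv : ∀ u ∈ interior (Set.Icc s t₁), 0 ≤ deriv h u := by
    intro u hu
    rw [interior_Icc] at hu
    have hu0 : 0 ≤ u := le_trans (le_trans ht₀ hst₀) hu.1.le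
    have hhu : h u < 0 := hbetween u hu
    have := hineq u hu0
    rw [Real.sign_of_neg hhu] at this
    have hpow : 0 ≤ |h u| ^ ρ := Real.rpow_nonneg (abs_nonneg _) ρ
    nlinarith
  have hmono : MonotoneOn h (Set.Icc s t₁) :=
    monotoneOn_of_deriv_nonneg (convex_Icc s t₁)
      hdiff.continuous.continuousOn
      (fun u _ => (hdiff u).differentiableWithinAt) hderiv
  have := hmono ⟨le_refl s, hst₁⟩ ⟨hst₁, le_refl t₁⟩ hst₁
  linarith
end

section
/- Fix q' ≥ 1 and let h₁, ..., h_{q'} : ℝ → ℝ be differentiable functions, each bounded above: hᵢ(t) < Mᵢ for all t ≥ 0, with Mᵢ > 0. Let α₁, ..., α_{q'} > 0 and γ > 0. Suppose for all t ≥ 0, Σᵢ αᵢ hᵢ'(t) ≥ -γ · sign(min{h₁(t), ..., h_{q'}(t)}). Then there exists T ∈ (0, ∞) such that min{h₁(T), ..., h_{q'}(T)} ≥ 0, i.e., hᵢ(T) ≥ 0 for all i simultaneously. -/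
/-! If some barrier stayed negative at every positive time, the minimum would be negative, its sign
`-1`, and the weighted sum `∑ αᵢ hᵢ` would grow at rate at least `γ` forever; but the upper bounds
`hᵢ < Mᵢ` cap that sum by `∑ αᵢ Mᵢ`. -/

theorem exists_le_apply_of_forall_le_deriv {f : ℝ → ℝ} (hf : Differentiable ℝ f) {a γ : ℝ}
    (hγ : 0 < γ) (hderiv : ∀ t, a ≤ t → γ ≤ deriv f t) (B : ℝ) : ∃ t, a ≤ t ∧ B ≤ f t := by
  have hgrowth : ∀ t, a ≤ t → γ * (t - a) ≤ f t - f a := fun t ht =>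
    (convex_Ici a).mul_sub_le_image_sub_of_le_deriv hf.continuous.continuousOn
      hf.differentiableOn (fun x hx => hderiv x (interior_subset hx)) a Set.self_mem_Ici t ht ht
  refine ⟨a + |B - f a| / γ, le_add_of_nonneg_right (by positivity), ?_⟩
  have := hgrowth (a + |B - f a| / γ) (le_add_of_nonneg_right (by positivity))
  rw [add_sub_cancel_left, mul_div_cancel₀ _ hγ.ne'] at this
  linarith [le_abs_self (B - f a)]

theorem stmt_2_general (q' : ℕ) (h : Fin q' → ℝ → ℝ)
    (hdiff : ∀ i, Differentiable ℝ (h i))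
    (M : Fin q' → ℝ) (hbdd : ∀ i, ∀ t : ℝ, 0 ≤ t → h i t < M i)
    (α : Fin q' → ℝ) (hα : ∀ i, 0 < α i) (γ : ℝ) (hγ : 0 < γ)
    (hne : (Finset.univ : Finset (Fin q')).Nonempty)
    (hineq : ∀ t : ℝ, 0 ≤ t →
      ∑ i, α i * deriv (h i) t ≥ -γ * Real.sign (Finset.univ.inf' hne fun i => h i t)) :
    ∃ T : ℝ, 0 < T ∧ ∀ i, h i T ≥ 0 := by
  by_contra! hneg
  set g : ℝ → ℝ := fun t => ∑ i, α i * h i t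
  have hg : ∀ t, HasDerivAt g (∑ i, α i * deriv (h i) t) t := fun t =>
    HasDerivAt.fun_sum fun i _ => (hdiff i t).hasDerivAt.const_mul (α i)
  have hslope : ∀ t, 1 ≤ t → γ ≤ deriv g t := by
    intro t ht
    obtain ⟨i, hi⟩ := hneg t (by linarith)
    have hmin : Finset.univ.inf' hne (fun i => h i t) < 0 :=
      (Finset.inf'_lt_iff hne).2 ⟨i, Finset.mem_univ i, hi⟩
    have := hineq t (by linarith)
    rw [Real.sign_of_neg hmin] at this
    rw [(hg t).deriv]
    linarith
  obtain ⟨t, ht, hlarge⟩ := exists_le_apply_of_forall_le_deriv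
    (fun t => (hg t).differentiableAt) hγ hslope (∑ i, α i * M i)
  have hsmall : g t < ∑ i, α i * M i := Finset.sum_lt_sum_of_nonempty hne fun i _ =>
    mul_lt_mul_of_pos_left (hbdd i t (by linarith)) (hα i)
  linarith

theorem stmt_2 (q' : ℕ) (hq : 1 ≤ q') (h : Fin q' → ℝ → ℝ)
    (hdiff : ∀ i, Differentiable ℝ (h i))
    (M : Fin q' → ℝ) (hM : ∀ i, 0 < M i) (hbdd : ∀ i, ∀ t : ℝ, 0 ≤ t → h i t < M i)
    (α : Fin q' → ℝ) (hα : ∀ i, 0 < α i) (γ : ℝ) (hγ : 0 < γ)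
    (hne : (Finset.univ : Finset (Fin q')).Nonempty)
    (hineq : ∀ t : ℝ, 0 ≤ t →
      ∑ i, α i * deriv (h i) t ≥ -γ * Real.sign (Finset.univ.inf' hne fun i => h i t)) :
    ∃ T : ℝ, 0 < T ∧ ∀ i, h i T ≥ 0 :=
  stmt_2_general q' h hdiff M hbdd α hα γ hγ hne hineq
end

section
/- Let h₁, ..., h_{q'} : ℝ → ℝ be differentiable with each hᵢ(t) < Mᵢ for all t, Mᵢ > 0, let αᵢ > 0 and γ > 0, and suppose Σᵢ αᵢ hᵢ'(t) ≥ γ for all t in any interval where min{h₁(t),...,h_{q'}(t)} < 0. If additionally min{h₁(t),...,h_{q'}(t)} < 0 for all t ≥ 0, then lim_{t→∞} Σᵢ αᵢ hᵢ(t) = ∞, which is a contradiction; hence the assumption that the minimum stays negative for all time is impossible. -/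
open Filter Set

/- Wherever some `hᵢ` is negative the weighted sum `F = ∑ αᵢ hᵢ` has slope at least `γ`, so if
this holds on all of `[0, ∞)` the mean value theorem gives `F t ≥ F 0 + γ t` and `F` tends to
infinity; but `F < ∑ αᵢ Mᵢ` everywhere. -/

theorem tendsto_atTop_of_pos_le_deriv {f : ℝ → ℝ} {a γ : ℝ} (hf : ContinuousOn f (Ici a))
    (hf' : DifferentiableOn ℝ f (Ioi a)) (hγ : 0 < γ) (hderiv : ∀ t > a, γ ≤ deriv f t) :
    Tendsto f atTop atTop := by
  have hlin : ∀ t ≥ a, f a + γ * (t - a) ≤ f t := fun t ht => by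
    have := (convex_Ici a).mul_sub_le_image_sub_of_le_deriv hf (by rwa [interior_Ici])
      (by rwa [interior_Ici]) a self_mem_Ici t ht ht
    linarith
  refine tendsto_atTop_mono' _ (eventually_atTop.2 ⟨a, hlin⟩) ?_
  exact tendsto_atTop_add_const_left _ _
    ((tendsto_atTop_add_const_right _ (-a) tendsto_id).const_mul_atTop hγ)

theorem deriv_fun_sum_const_mul {𝕜 ι : Type*} [NontriviallyNormedField 𝕜] (s : Finset ι)
    (α : ι → 𝕜) {h : ι → 𝕜 → 𝕜} {t : 𝕜} (hh : ∀ i ∈ s, DifferentiableAt 𝕜 (h i) t) :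
    deriv (fun t => ∑ i ∈ s, α i * h i t) t = ∑ i ∈ s, α i * deriv (h i) t := by
  rw [deriv_fun_sum fun i hi => (hh i hi).const_mul (α i)]
  simp only [deriv_const_mul_field']

theorem stmt_3_general (q' : ℕ) (h : Fin q' → ℝ → ℝ)
    (hdiff : ∀ i, Differentiable ℝ (h i))
    (M : Fin q' → ℝ) (hbdd : ∀ i, ∀ t : ℝ, h i t < M i)
    (α : Fin q' → ℝ) (hα : ∀ i, 0 < α i) (γ : ℝ) (hγ : 0 < γ)
    (hne : (Finset.univ : Finset (Fin q')).Nonempty)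
    (hineq : ∀ t : ℝ, (Finset.univ.inf' hne fun i => h i t) < 0 →
      ∑ i, α i * deriv (h i) t ≥ γ)
    (hneg : ∀ t : ℝ, 0 ≤ t → (Finset.univ.inf' hne fun i => h i t) < 0) :
    Filter.Tendsto (fun t => ∑ i, α i * h i t) Filter.atTop Filter.atTop ∧ False := by
  set F : ℝ → ℝ := fun t => ∑ i, α i * h i t
  have hF : Differentiable ℝ F := by fun_prop
  have hF_tendsto : Tendsto F atTop atTop :=
    tendsto_atTop_of_pos_le_deriv (a := 0) hF.continuous.continuousOn hF.differentiableOn hγ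
      fun t ht => by
        rw [deriv_fun_sum_const_mul _ _ fun i _ => hdiff i t]
        exact hineq t (hneg t ht.le)
  have hF_bdd : BddAbove (range F) := ⟨∑ i, α i * M i, forall_mem_range.2 fun t =>
    (Finset.sum_lt_sum_of_nonempty hne fun i _ => mul_lt_mul_of_pos_left (hbdd i t) (hα i)).le⟩
  exact ⟨hF_tendsto, not_bddAbove_of_tendsto_atTop hF_tendsto hF_bdd⟩

theorem stmt_3 (q' : ℕ) (hq : 1 ≤ q') (h : Fin q' → ℝ → ℝ)
    (hdiff : ∀ i, Differentiable ℝ (h i))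
    (M : Fin q' → ℝ) (hM : ∀ i, 0 < M i) (hbdd : ∀ i, ∀ t : ℝ, h i t < M i)
    (α : Fin q' → ℝ) (hα : ∀ i, 0 < α i) (γ : ℝ) (hγ : 0 < γ)
    (hne : (Finset.univ : Finset (Fin q')).Nonempty)
    (hineq : ∀ t : ℝ, (Finset.univ.inf' hne fun i => h i t) < 0 →
      ∑ i, α i * deriv (h i) t ≥ γ)
    (hneg : ∀ t : ℝ, 0 ≤ t → (Finset.univ.inf' hne fun i => h i t) < 0) :
    Filter.Tendsto (fun t => ∑ i, α i * h i t) Filter.atTop Filter.atTop ∧ False :=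
  stmt_3_general q' h hdiff M hbdd α hα γ hγ hne hineq hneg
end

section
/- Let h : ℝ → ℝ be differentiable with h(0) < 0, γ > 0, ρ ∈ [0,1), and suppose h'(t) ≥ γ · |h(t)|^ρ for all t ≥ 0 with h(t) < 0. Define T₀ = |h(0)|^(1-ρ)/(γ(1-ρ)). Then h(t) ≥ 0 for some t ≤ T₀. Moreover, for all t < inf{s : h(s) ≥ 0}, the comparison bound h(t) ≥ -(|h(0)|^(1-ρ) - γ(1-ρ)t)^(1/(1-ρ)) holds. -/
lemma key_mvt (h : ℝ → ℝ) (hdiff : Differentiable ℝ h)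
    (γ ρ : ℝ) (hγ : 0 < γ) (hρ0 : 0 ≤ ρ) (hρ1 : ρ < 1)
    (hineq : ∀ t : ℝ, 0 ≤ t → h t < 0 → deriv h t ≥ γ * |h t| ^ ρ)
    (b : ℝ) (hb : 0 ≤ b) (hneg : ∀ s ∈ Set.Icc (0:ℝ) b, h s < 0) :
    (-h b) ^ (1 - ρ) ≤ (-h 0) ^ (1 - ρ) - γ * (1 - ρ) * b := by
  set g : ℝ → ℝ := fun s => (-h s) ^ (1 - ρ) with hg
  have hρ' : (0:ℝ) < 1 - ρ := by linarith
  have hderiv : ∀ x ∈ Set.Ioo (0:ℝ) b,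
      HasDerivAt g ((-deriv h x) * (1 - ρ) * (-h x) ^ (1 - ρ - 1)) x := by
    intro x hx
    have hhx : h x < 0 := hneg x ⟨le_of_lt hx.1, le_of_lt hx.2⟩
    have : HasDerivAt (fun s => -h s) (-deriv h x) x := ((hdiff x).hasDerivAt).neg
    exact this.rpow_const (Or.inl (by linarith))
  have hcont : ContinuousOn g (Set.Icc 0 b) :=
    (hdiff.continuous.neg.continuousOn).rpow_const (fun x _ => Or.inr (le_of_lt hρ'))
  have hint : interior (Set.Icc (0:ℝ) b) = Set.Ioo 0 b := interior_Icc
  have hdiffOn : DifferentiableOn ℝ g (interior (Set.Icc (0:ℝ) b)) := by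
    rw [hint]; intro x hx
    exact (hderiv x hx).differentiableAt.differentiableWithinAt
  have hbound : ∀ x ∈ interior (Set.Icc (0:ℝ) b), deriv g x ≤ -(γ * (1 - ρ)) := by
    rw [hint]; intro x hx
    rw [(hderiv x hx).deriv]
    have hhx : h x < 0 := hneg x ⟨le_of_lt hx.1, le_of_lt hx.2⟩
    have hu : (0:ℝ) < -h x := by linarith
    have hd : deriv h x ≥ γ * (-h x) ^ ρ := by
      have := hineq x (le_of_lt hx.1) hhx
      rwa [abs_of_neg hhx] at this
    have hup : (0:ℝ) < (-h x) ^ (1 - ρ - 1) := Real.rpow_pos_of_pos hu _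
    have hkey : γ ≤ deriv h x * (-h x) ^ (1 - ρ - 1) := by
      have h1 : γ * (-h x) ^ ρ * (-h x) ^ (1 - ρ - 1) ≤ deriv h x * (-h x) ^ (1 - ρ - 1) :=
        mul_le_mul_of_nonneg_right hd (le_of_lt hup)
      have h2 : (-h x) ^ ρ * (-h x) ^ (1 - ρ - 1) = (-h x) ^ (ρ + (1 - ρ - 1)) :=
        (Real.rpow_add hu _ _).symm
      have h3 : ρ + (1 - ρ - 1) = 0 := by ring
      rw [mul_assoc, h2, h3, Real.rpow_zero, mul_one] at h1
      exact h1
    nlinarith [mul_le_mul_of_nonneg_right hkey (le_of_lt hρ')]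
  have := (convex_Icc (0:ℝ) b).image_sub_le_mul_sub_of_deriv_le hcont hdiffOn hbound
    0 (Set.left_mem_Icc.mpr hb) b (Set.right_mem_Icc.mpr hb) hb
  simp only [hg] at this ⊢
  nlinarith [this]

theorem stmt_6 (h : ℝ → ℝ) (hdiff : Differentiable ℝ h) (h0 : h 0 < 0)
    (γ ρ : ℝ) (hγ : 0 < γ) (hρ0 : 0 ≤ ρ) (hρ1 : ρ < 1)
    (hineq : ∀ t : ℝ, 0 ≤ t → h t < 0 → deriv h t ≥ γ * |h t| ^ ρ) :
    (∃ t : ℝ, 0 ≤ t ∧ t ≤ |h 0| ^ (1 - ρ) / (γ * (1 - ρ)) ∧ h t ≥ 0) ∧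
    (∀ t : ℝ, 0 ≤ t → t < sInf {s : ℝ | h s ≥ 0} →
      h t ≥ -((|h 0| ^ (1 - ρ) - γ * (1 - ρ) * t) ^ (1 / (1 - ρ)))) := by
  have hρ' : (0:ℝ) < 1 - ρ := by linarith
  have habs : |h 0| = -h 0 := abs_of_neg h0
  have hg0pos : (0:ℝ) < (-h 0) ^ (1 - ρ) := Real.rpow_pos_of_pos (by linarith) _
  have hTpos : 0 < |h 0| ^ (1 - ρ) / (γ * (1 - ρ)) := by
    rw [habs]; positivity
  constructor
  · by_contra hc
    push_neg at hc
    set T := |h 0| ^ (1 - ρ) / (γ * (1 - ρ)) with hT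
    have hneg : ∀ s ∈ Set.Icc (0:ℝ) T, h s < 0 := fun s hs => hc s hs.1 hs.2
    have := key_mvt h hdiff γ ρ hγ hρ0 hρ1 hineq T (le_of_lt hTpos) hneg
    have hTeq : γ * (1 - ρ) * T = (-h 0) ^ (1 - ρ) := by
      rw [hT, habs]; field_simp
    rw [hTeq] at this
    have : (-h T) ^ (1 - ρ) ≤ 0 := by linarith
    have hTneg : h T < 0 := hneg T ⟨le_of_lt hTpos, le_refl _⟩
    have : (0:ℝ) < (-h T) ^ (1 - ρ) := Real.rpow_pos_of_pos (by linarith) _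
    linarith
  · intro t ht htI
    have hneg : ∀ s ∈ Set.Icc (0:ℝ) t, h s < 0 := by
      intro s hs
      by_contra hcs
      push_neg at hcs
      have hsS : s ∈ {s : ℝ | h s ≥ 0} := hcs
      by_cases hbd : BddBelow {s : ℝ | h s ≥ 0}
      · have := csInf_le hbd hsS
        linarith [hs.2]
      · rw [Real.sInf_of_not_bddBelow hbd] at htI
        linarith
    have hkey := key_mvt h hdiff γ ρ hγ hρ0 hρ1 hineq t ht hneg
    have hht : h t < 0 := hneg t ⟨ht, le_refl _⟩
    have hu : (0:ℝ) ≤ -h t := by linarith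
    have hA : (0:ℝ) ≤ (-h 0) ^ (1 - ρ) - γ * (1 - ρ) * t := by
      have : (0:ℝ) ≤ (-h t) ^ (1 - ρ) := Real.rpow_nonneg hu _
      linarith
    have hmono : ((-h t) ^ (1 - ρ)) ^ (1 / (1 - ρ)) ≤
        ((-h 0) ^ (1 - ρ) - γ * (1 - ρ) * t) ^ (1 / (1 - ρ)) :=
      Real.rpow_le_rpow (Real.rpow_nonneg hu _) hkey (by positivity)
    have hid : ((-h t) ^ (1 - ρ)) ^ (1 / (1 - ρ)) = -h t := by
      rw [← Real.rpow_mul hu]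
      rw [show (1 - ρ) * (1 / (1 - ρ)) = 1 by field_simp]
      exact Real.rpow_one _
    rw [hid] at hmono
    rw [habs]
    linarith
end

section
/- Let x : [0,∞) → ℝ² be differentiable with ẋ(t) = u(t), and let h(x) = 1 - (x - C)ᵀP(x - C) with P positive definite and C ∈ ℝ². Suppose γ > 0, ρ ∈ [0,1), h(x(0)) < 0, and the control satisfies -2(x(t)-C)ᵀP·u(t) ≥ -γ·sign(h(x(t)))·|h(x(t))|^ρ... i.e. ∇h(x(t))·u(t) + γ·sign(h(x(t)))·|h(x(t))|^ρ ≥ 0 for all t. Then there exists T ≤ |h(x(0))|^(1-ρ)/(γ(1-ρ)) with h(x(T)) ≥ 0, i.e., x(T) lies in the ellipsoidal region {x : (x-C)ᵀP(x-C) ≤ 1}. -/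
/-!
Along the trajectory, `φ = h ∘ x` has derivative `-2 (x - C)ᵀ P u` because `P` is symmetric.
While `φ < 0` the control condition says `φ' ≥ γ (-φ)^ρ`, so `(-φ)^(1-ρ)` decreases at rate at
least `γ (1 - ρ)`. Starting from `|φ 0|^(1-ρ)`, it would reach `0` by time
`|φ 0|^(1-ρ) / (γ (1 - ρ))`; hence `φ` cannot stay negative that long.
-/

open Matrix

section QuadraticForm

variable {n : Type*} [Fintype n] {a b : ℝ → n → ℝ} {a' b' : n → ℝ} {t : ℝ}

theorem HasDerivAt.dotProduct (ha : HasDerivAt a a' t) (hb : HasDerivAt b b' t) :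
    HasDerivAt (fun s => a s ⬝ᵥ b s) (a' ⬝ᵥ b t + a t ⬝ᵥ b') t := by
  simp only [_root_.dotProduct, ← Finset.sum_add_distrib]
  exact HasDerivAt.fun_sum fun i _ => (hasDerivAt_pi.1 ha i).mul (hasDerivAt_pi.1 hb i)

theorem HasDerivAt.mulVec {m : Type*} (P : Matrix m n ℝ) (ha : HasDerivAt a a' t) :
    HasDerivAt (fun s => P *ᵥ a s) (P *ᵥ a') t :=
  hasDerivAt_pi.2 fun i => ((hasDerivAt_const t (P i)).dotProduct ha).congr_deriv (by simp; rfl)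

theorem HasDerivAt.dotProduct_mulVec_self {P : Matrix n n ℝ} (hP : P.IsSymm)
    (ha : HasDerivAt a a' t) :
    HasDerivAt (fun s => a s ⬝ᵥ (P *ᵥ a s)) (2 * (a t ⬝ᵥ (P *ᵥ a'))) t := by
  refine (ha.dotProduct (ha.mulVec P)).congr_deriv ?_
  rw [dotProduct_mulVec, ← mulVec_transpose, hP.eq, dotProduct_comm (P *ᵥ a')]
  ring

end QuadraticForm

section FiniteTimeBarrier

variable {φ φ' : ℝ → ℝ} {γ ρ : ℝ}

theorem neg_rpow_le_sub_of_deriv_ge {a b : ℝ} (hρ : ρ < 1) (hab : a ≤ b)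
    (hφ : ∀ t ∈ Set.Icc a b, HasDerivAt φ (φ' t) t) (hneg : ∀ t ∈ Set.Icc a b, φ t < 0)
    (hbound : ∀ t ∈ Set.Icc a b, γ * |φ t| ^ ρ ≤ φ' t) :
    (-φ b) ^ (1 - ρ) ≤ (-φ a) ^ (1 - ρ) - γ * (1 - ρ) * (b - a) := by
  have hV : ∀ t ∈ Set.Icc a b, HasDerivAt (fun s => (-φ s) ^ (1 - ρ))
      (-φ' t * (1 - ρ) * (-φ t) ^ (1 - ρ - 1)) t := fun t ht =>
    (hφ t ht).neg.rpow_const (Or.inl (neg_ne_zero.2 (hneg t ht).ne))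
  have hV' : ∀ t ∈ interior (Set.Icc a b),
      deriv (fun s => (-φ s) ^ (1 - ρ)) t ≤ -(γ * (1 - ρ)) := by
    intro t ht
    replace ht := interior_subset ht
    have hpos : 0 < -φ t := neg_pos.2 (hneg t ht)
    have hb := hbound t ht
    rw [abs_of_neg (hneg t ht)] at hb
    have hcancel : (-φ t) ^ ρ * (-φ t) ^ (1 - ρ - 1) = 1 := by
      rw [← Real.rpow_add hpos]; norm_num
    rw [(hV t ht).deriv]
    calc -φ' t * (1 - ρ) * (-φ t) ^ (1 - ρ - 1)
        ≤ -(γ * (-φ t) ^ ρ) * (1 - ρ) * (-φ t) ^ (1 - ρ - 1) := by gcongr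
      _ = -(γ * (1 - ρ)) := by linear_combination (-(γ * (1 - ρ))) * hcancel
  have := (convex_Icc a b).image_sub_le_mul_sub_of_deriv_le
    (fun t ht => (hV t ht).continuousAt.continuousWithinAt)
    (fun t ht => (hV t (interior_subset ht)).differentiableAt.differentiableWithinAt)
    hV' a (Set.left_mem_Icc.2 hab) b (Set.right_mem_Icc.2 hab) hab
  linarith

theorem exists_nonneg_of_deriv_ge_rpow (hγ : 0 < γ) (hρ : ρ < 1)
    (hφ : ∀ t, 0 ≤ t → HasDerivAt φ (φ' t) t) (h0 : φ 0 < 0)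
    (hbound : ∀ t, 0 ≤ t → φ t < 0 → γ * |φ t| ^ ρ ≤ φ' t) :
    ∃ T, 0 ≤ T ∧ T ≤ |φ 0| ^ (1 - ρ) / (γ * (1 - ρ)) ∧ 0 ≤ φ T := by
  set T₀ := |φ 0| ^ (1 - ρ) / (γ * (1 - ρ))
  have hρ' : 0 < 1 - ρ := sub_pos.2 hρ
  have hT₀ : 0 < T₀ := by unfold T₀; have := abs_pos.2 h0.ne; positivity
  by_contra! hall
  have hneg : ∀ t ∈ Set.Icc 0 T₀, φ t < 0 := fun t ht => hall t ht.1 ht.2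
  have hdecay := neg_rpow_le_sub_of_deriv_ge hρ hT₀.le (fun t ht => hφ t ht.1) hneg
    (fun t ht => hbound t ht.1 (hneg t ht))
  have hT₀eq : γ * (1 - ρ) * (T₀ - 0) = (-φ 0) ^ (1 - ρ) := by
    rw [sub_zero, ← abs_of_neg h0]; unfold T₀; field_simp
  have hpos : 0 < (-φ T₀) ^ (1 - ρ) :=
    Real.rpow_pos_of_pos (neg_pos.2 (hneg T₀ (Set.right_mem_Icc.2 hT₀.le))) _
  linarith

end FiniteTimeBarrier

theorem stmt_16_general (x u : ℝ → (Fin 2 → ℝ)) (hdyn : ∀ t : ℝ, HasDerivAt x (u t) t)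
    (P : Matrix (Fin 2) (Fin 2) ℝ) (hP : P.PosDef) (C : Fin 2 → ℝ)
    (h : (Fin 2 → ℝ) → ℝ) (hdef : ∀ v, h v = 1 - (v - C) ⬝ᵥ (P *ᵥ (v - C)))
    (γ ρ : ℝ) (hγ : 0 < γ) (hρ1 : ρ < 1)
    (h0 : h (x 0) < 0)
    (hctrl : ∀ t : ℝ, 0 ≤ t →
      -2 * ((x t - C) ⬝ᵥ (P *ᵥ u t)) + γ * Real.sign (h (x t)) * |h (x t)| ^ ρ ≥ 0) :
    ∃ T : ℝ, 0 ≤ T ∧ T ≤ |h (x 0)| ^ (1 - ρ) / (γ * (1 - ρ)) ∧ h (x T) ≥ 0 ∧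
      (x T - C) ⬝ᵥ (P *ᵥ (x T - C)) ≤ 1 := by
  have hderiv (t : ℝ) : HasDerivAt (fun s => h (x s)) (-2 * ((x t - C) ⬝ᵥ (P *ᵥ u t))) t := by
    simp only [hdef]
    exact ((hdyn t).sub_const C).dotProduct_mulVec_self
      (isHermitian_iff_isSymm.1 hP.isHermitian) |>.const_sub 1 |>.congr_deriv (by ring)
  obtain ⟨T, hT0, hTle, hT⟩ := exists_nonneg_of_deriv_ge_rpow hγ hρ1 (fun t _ => hderiv t) h0
    fun t ht hneg => by
      have := hctrl t ht
      rw [Real.sign_of_neg hneg] at this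
      linarith
  exact ⟨T, hT0, hTle, hT, by linarith [hdef (x T)]⟩

theorem stmt_16 (x u : ℝ → (Fin 2 → ℝ)) (hdyn : ∀ t : ℝ, HasDerivAt x (u t) t)
    (P : Matrix (Fin 2) (Fin 2) ℝ) (hP : P.PosDef) (C : Fin 2 → ℝ)
    (h : (Fin 2 → ℝ) → ℝ) (hdef : ∀ v, h v = 1 - (v - C) ⬝ᵥ (P *ᵥ (v - C)))
    (γ ρ : ℝ) (hγ : 0 < γ) (hρ0 : 0 ≤ ρ) (hρ1 : ρ < 1)
    (h0 : h (x 0) < 0)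
    (hctrl : ∀ t : ℝ, 0 ≤ t →
      -2 * ((x t - C) ⬝ᵥ (P *ᵥ u t)) + γ * Real.sign (h (x t)) * |h (x t)| ^ ρ ≥ 0) :
    ∃ T : ℝ, 0 ≤ T ∧ T ≤ |h (x 0)| ^ (1 - ρ) / (γ * (1 - ρ)) ∧ h (x T) ≥ 0 ∧
      (x T - C) ⬝ᵥ (P *ᵥ (x T - C)) ≤ 1 :=
  stmt_16_general x u hdyn P hP C h hdef γ ρ hγ hρ1 h0 hctrl
end
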